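/- arXiv:2110.06068 — 7 statements merged into one kernel-verified Lean document; each statement's English description precedes it below -/
import Mathlib

section
/- Assume K_{ij} = K_{ji} ≥ 0 for i ≠ j and K_{ii} = 0. Then for every u in the open simplex S and every ξ ∈ ℝ^{n+1} with Σ_i ξ_i = 0, one has ξᵀ P(u) ξ ≥ Σ_{α=0}^n κ^{(α)} ( ξ_α²/u_α + u_α Σ_{j=0}^n ξ_j²/u_j ), where κ^{(α)} = (1/2) min_{ℓ ≠ α} K_{αℓ}. -/
/-- lower bound ξᵀ P(u) ξ ≥ Σ_α κ^{(α)} (ξ_α²/u_α + u_α Σ_j ξ_j²/u_j)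
on the tangent space Σ_i ξ_i = 0, where κ^{(α)} = (1/2) min_{ℓ≠α} K_{αℓ}. -/
theorem stmt_1 (n : ℕ) (K : Matrix (Fin (n+1)) (Fin (n+1)) ℝ)
    (hdiag : ∀ i, K i i = 0) (hsym : ∀ i j, K i j = K j i)
    (hnn : ∀ i j, i ≠ j → 0 ≤ K i j)
    (u : Fin (n+1) → ℝ) (hpos : ∀ i, 0 < u i) (hsum : ∑ i, u i = 1)
    (ξ : Fin (n+1) → ℝ) (htan : ∑ i, ξ i = 0) :
    ∑ i, ∑ j, ξ i * ((if i = j then (1 / u j) * ∑ k, K i k * u k else 0) - K i j) * ξ j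
      ≥ ∑ α, ((1/2) * sInf {x : ℝ | ∃ ℓ, ℓ ≠ α ∧ x = K α ℓ}) *
          ((ξ α)^2 / u α + u α * ∑ j, (ξ j)^2 / u j) := by
  have hu : ∀ i, u i ≠ 0 := fun i => (hpos i).ne'
  set t : Fin (n+1) → Fin (n+1) → ℝ :=
    fun i j => u i * u j * (ξ i / u i - ξ j / u j)^2 with ht
  have htnn : ∀ i j, 0 ≤ t i j := fun i j =>
    mul_nonneg (mul_nonneg (hpos i).le (hpos j).le) (sq_nonneg _)
  -- κ properties
  have hκnn : ∀ α : Fin (n+1), 0 ≤ (1/2) * sInf {x : ℝ | ∃ ℓ, ℓ ≠ α ∧ x = K α ℓ} := by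
    intro α
    have h0 : 0 ≤ sInf {x : ℝ | ∃ ℓ, ℓ ≠ α ∧ x = K α ℓ} := by
      apply Real.sInf_nonneg
      rintro x ⟨ℓ, hℓ, rfl⟩
      exact hnn α ℓ (Ne.symm hℓ)
    linarith
  have hκle : ∀ (α j : Fin (n+1)), j ≠ α →
      (1/2) * sInf {x : ℝ | ∃ ℓ, ℓ ≠ α ∧ x = K α ℓ} ≤ (1/2) * K α j := by
    intro α j hj
    have hb : BddBelow {x : ℝ | ∃ ℓ, ℓ ≠ α ∧ x = K α ℓ} := by
      refine ⟨0, ?_⟩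
      rintro x ⟨ℓ, hℓ, rfl⟩
      exact hnn α ℓ (Ne.symm hℓ)
    have hmem : K α j ∈ {x : ℝ | ∃ ℓ, ℓ ≠ α ∧ x = K α ℓ} := ⟨j, hj, rfl⟩
    have := csInf_le hb hmem
    linarith
  -- Step 1: LHS = (1/2) ∑∑ K i j * t i j
  have hL : (∑ i, ∑ j, ξ i * ((if i = j then (1 / u j) * ∑ k, K i k * u k else 0) - K i j) * ξ j)
      = (1/2) * ∑ i, ∑ j, K i j * t i j := by
    have h1 : ∀ i : Fin (n+1),
        (∑ j, ξ i * ((if i = j then (1 / u j) * ∑ k, K i k * u k else 0) - K i j) * ξ j)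
        = (∑ k, K i k * (u k * (ξ i ^ 2 / u i))) - ∑ j, K i j * (ξ i * ξ j) := by
      intro i
      have h2 : ∀ j : Fin (n+1),
          ξ i * ((if i = j then (1 / u j) * ∑ k, K i k * u k else 0) - K i j) * ξ j
          = (if i = j then ξ i ^ 2 / u i * (∑ k, K i k * u k) else 0) - K i j * (ξ i * ξ j) := by
        intro j
        by_cases h : i = j
        · subst h; rw [if_pos rfl, if_pos rfl]; ring
        · rw [if_neg h, if_neg h]; ring
      rw [Finset.sum_congr rfl fun j _ => h2 j, Finset.sum_sub_distrib,
        Finset.sum_ite_eq Finset.univ i]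
      simp only [Finset.mem_univ, if_true]
      congr 1
      rw [Finset.mul_sum]
      exact Finset.sum_congr rfl fun k _ => by ring
    have h3 : ∀ i j : Fin (n+1), K i j * t i j
        = K i j * (u j * (ξ i ^ 2 / u i)) + K i j * (u i * (ξ j ^ 2 / u j))
          - 2 * (K i j * (ξ i * ξ j)) := by
      intro i j
      have hi := hu i; have hj := hu j
      simp only [ht]
      field_simp
      ring
    have hswap : (∑ i, ∑ j, K i j * (u i * (ξ j ^ 2 / u j)))
        = ∑ i, ∑ j, K i j * (u j * (ξ i ^ 2 / u i)) := by
      rw [Finset.sum_comm]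
      exact Finset.sum_congr rfl fun i _ => Finset.sum_congr rfl fun j _ => by rw [hsym]
    have h2sum : (∑ i, ∑ j, (2:ℝ) * (K i j * (ξ i * ξ j)))
        = 2 * ∑ i, ∑ j, K i j * (ξ i * ξ j) := by
      simp [Finset.mul_sum]
    calc (∑ i, ∑ j, ξ i * ((if i = j then (1 / u j) * ∑ k, K i k * u k else 0) - K i j) * ξ j)
        = ∑ i, ((∑ k, K i k * (u k * (ξ i ^ 2 / u i))) - ∑ j, K i j * (ξ i * ξ j)) :=
          Finset.sum_congr rfl fun i _ => h1 i
      _ = (∑ i, ∑ j, K i j * (u j * (ξ i ^ 2 / u i))) - ∑ i, ∑ j, K i j * (ξ i * ξ j) := by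
          rw [Finset.sum_sub_distrib]
      _ = (1/2) * ∑ i, ∑ j, K i j * t i j := by
          simp only [h3, Finset.sum_sub_distrib, Finset.sum_add_distrib]
          rw [h2sum]
          linarith [hswap]
  -- Step 2: per-α identity
  have hS : ∀ α : Fin (n+1), (∑ j, t α j) = (ξ α)^2 / u α + u α * ∑ j, (ξ j)^2 / u j := by
    intro α
    have h4 : ∀ j : Fin (n+1), t α j
        = ξ α ^ 2 / u α * u j - 2 * ξ α * ξ j + u α * (ξ j ^ 2 / u j) := by
      intro j
      have ha := hu α; have hj := hu j
      simp only [ht]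
      field_simp
      ring
    calc (∑ j, t α j)
        = ∑ j, (ξ α ^ 2 / u α * u j - 2 * ξ α * ξ j + u α * (ξ j ^ 2 / u j)) :=
          Finset.sum_congr rfl fun j _ => h4 j
      _ = ξ α ^ 2 / u α * (∑ j, u j) - 2 * ξ α * (∑ j, ξ j) + u α * ∑ j, ξ j ^ 2 / u j := by
          simp only [Finset.sum_add_distrib, Finset.sum_sub_distrib, ← Finset.mul_sum]
      _ = (ξ α)^2 / u α + u α * ∑ j, (ξ j)^2 / u j := by
          rw [hsum, htan]; ring
  -- Conclusion
  rw [ge_iff_le, hL]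
  have key : ∀ α j : Fin (n+1),
      ((1/2) * sInf {x : ℝ | ∃ ℓ, ℓ ≠ α ∧ x = K α ℓ}) * t α j ≤ (1/2) * (K α j * t α j) := by
    intro α j
    by_cases h : j = α
    · subst h
      have h0 : t j j = 0 := by simp [ht]
      simp [h0]
    · have h1 := hκle α j h
      have h2 := htnn α j
      have h3 := hκnn α
      nlinarith
  calc ∑ α, ((1/2) * sInf {x : ℝ | ∃ ℓ, ℓ ≠ α ∧ x = K α ℓ}) *
          ((ξ α)^2 / u α + u α * ∑ j, (ξ j)^2 / u j)
      = ∑ α, ∑ j, ((1/2) * sInf {x : ℝ | ∃ ℓ, ℓ ≠ α ∧ x = K α ℓ}) * t α j := by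
        refine Finset.sum_congr rfl fun α _ => ?_
        rw [← hS α, Finset.mul_sum]
    _ ≤ ∑ α, ∑ j, (1/2) * (K α j * t α j) :=
        Finset.sum_le_sum fun α _ => Finset.sum_le_sum fun j _ => key α j
    _ = (1/2) * ∑ i, ∑ j, K i j * t i j := by
        simp [Finset.mul_sum]
end

section
/- Assume K_{ij} = K_{ji} ≥ 0 for i ≠ j and K_{ii} = 0, and let κ = min_{i≠j} K_{ij}. Then for every u in the open simplex S and every ξ ∈ ℝ^{n+1} with Σ_i ξ_i = 0, one has ξᵀ P(u) ξ ≥ κ · Σ_{j=0}^n ξ_j²/u_j. -/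
/-!
For symmetric `K` and `u_i > 0`,
`2 ξᵀ P(u) ξ = ∑_{i,j} K_ij u_i u_j (ξ_i/u_i - ξ_j/u_j)²`.
Replacing `K` by `K - κ` changes `ξᵀ P(u) ξ` by exactly `-κ ∑ ξ_j²/u_j` on the tangent space
(`∑ u = 1`, `∑ ξ = 0`), and the shifted weights are nonnegative off the diagonal, so the
shifted sum of squares is nonnegative.
-/

open Finset

namespace SimplexQuadForm

variable {ι : Type*} [Fintype ι]

/-- `ξᵀ P(u) ξ`, with the diagonal part of `P(u)` written out. -/
noncomputable def quadFormP (K : ι → ι → ℝ) (u ξ : ι → ℝ) : ℝ :=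
  ∑ i, ξ i ^ 2 / u i * ∑ k, K i k * u k - ∑ i, ∑ j, K i j * ξ i * ξ j

theorem sum_sum_mul_ite_sub_mul_eq_quadFormP [DecidableEq ι] (K : ι → ι → ℝ) (u ξ : ι → ℝ) :
    ∑ i, ∑ j, ξ i * ((if i = j then (1 / u j) * ∑ k, K i k * u k else 0) - K i j) * ξ j
      = quadFormP K u ξ := by
  simp only [mul_sub, sub_mul, sum_sub_distrib, mul_ite, ite_mul, mul_zero, zero_mul,
    sum_ite_eq, mem_univ, if_true, quadFormP]
  congr 1
  · exact sum_congr rfl fun i _ => by ring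
  · exact sum_congr rfl fun i _ => sum_congr rfl fun j _ => by ring

theorem quadFormP_sub_const {u ξ : ι → ℝ} (hsum : ∑ i, u i = 1) (htan : ∑ i, ξ i = 0)
    (K : ι → ι → ℝ) (c : ℝ) :
    quadFormP (fun i j => K i j - c) u ξ = quadFormP K u ξ - c * ∑ i, ξ i ^ 2 / u i := by
  have hdiag : ∑ i, ξ i ^ 2 / u i * ∑ k, (K i k - c) * u k
      = ∑ i, ξ i ^ 2 / u i * ∑ k, K i k * u k - c * ∑ i, ξ i ^ 2 / u i := by
    simp only [sub_mul, sum_sub_distrib, ← mul_sum, hsum, mul_one, mul_sub, ← sum_mul]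
    ring
  have hoff : ∑ i, ∑ j, (K i j - c) * ξ i * ξ j = ∑ i, ∑ j, K i j * ξ i * ξ j := by
    simp only [sub_mul, sum_sub_distrib, mul_assoc, ← mul_sum, htan, mul_zero, sub_zero]
  rw [quadFormP, quadFormP, hdiag, hoff]
  ring

theorem two_mul_quadFormP {K : ι → ι → ℝ} (hK : ∀ i j, K i j = K j i) {u : ι → ℝ}
    (hu : ∀ i, u i ≠ 0) (ξ : ι → ℝ) :
    2 * quadFormP K u ξ = ∑ i, ∑ j, K i j * u i * u j * (ξ i / u i - ξ j / u j) ^ 2 := by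
  have hterm : ∀ i j, K i j * u i * u j * (ξ i / u i - ξ j / u j) ^ 2
      = ξ i ^ 2 / u i * (K i j * u j) + ξ j ^ 2 / u j * (K j i * u i)
        - 2 * (K i j * ξ i * ξ j) := by
    intro i j
    rw [hK j i]
    field_simp [hu i, hu j]
    ring
  simp only [hterm, sum_sub_distrib, sum_add_distrib, ← mul_sum]
  rw [sum_comm (f := fun i j => ξ j ^ 2 / u j * (K j i * u i))]
  simp only [← mul_sum, quadFormP]
  ring

theorem quadFormP_nonneg {K : ι → ι → ℝ} (hK : ∀ i j, K i j = K j i)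
    (hoff : ∀ i j, i ≠ j → 0 ≤ K i j) {u : ι → ℝ} (hu : ∀ i, 0 < u i) (ξ : ι → ℝ) :
    0 ≤ quadFormP K u ξ := by
  have hdirichlet : 0 ≤ ∑ i, ∑ j, K i j * u i * u j * (ξ i / u i - ξ j / u j) ^ 2 := by
    refine sum_nonneg fun i _ => sum_nonneg fun j _ => ?_
    rcases eq_or_ne i j with rfl | hij
    · simp
    · have := hoff i j hij
      have := hu i
      have := hu j
      positivity
  linarith [two_mul_quadFormP hK (fun i => (hu i).ne') ξ]

omit [Fintype ι] in
theorem sInf_offDiag_le [Finite ι] (K : ι → ι → ℝ) {i j : ι} (hij : i ≠ j) :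
    sInf {x : ℝ | ∃ i j, i ≠ j ∧ x = K i j} ≤ K i j := by
  have hfin : {x : ℝ | ∃ i j, i ≠ j ∧ x = K i j}.Finite :=
    (Set.finite_range fun p : ι × ι => K p.1 p.2).subset <| by
      rintro x ⟨i, j, -, rfl⟩
      exact ⟨(i, j), rfl⟩
  exact csInf_le hfin.bddBelow ⟨i, j, hij, rfl⟩

end SimplexQuadForm

open SimplexQuadForm in
theorem stmt_2_general (n : ℕ) (K : Matrix (Fin (n+1)) (Fin (n+1)) ℝ)
    (hsym : ∀ i j, K i j = K j i)
    (u : Fin (n+1) → ℝ) (hpos : ∀ i, 0 < u i) (hsum : ∑ i, u i = 1)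
    (ξ : Fin (n+1) → ℝ) (htan : ∑ i, ξ i = 0) :
    ∑ i, ∑ j, ξ i * ((if i = j then (1 / u j) * ∑ k, K i k * u k else 0) - K i j) * ξ j
      ≥ sInf {x : ℝ | ∃ i j, i ≠ j ∧ x = K i j} * ∑ j, (ξ j)^2 / u j := by
  set κ := sInf {x : ℝ | ∃ i j, i ≠ j ∧ x = K i j}
  have hshifted : 0 ≤ quadFormP (fun i j => K i j - κ) u ξ :=
    quadFormP_nonneg (fun i j => by rw [hsym i j]) (fun i j hij => sub_nonneg.2 <|
      sInf_offDiag_le K hij) hpos ξ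
  rw [quadFormP_sub_const hsum htan K κ] at hshifted
  rw [ge_iff_le]
  calc κ * ∑ j, ξ j ^ 2 / u j ≤ quadFormP K u ξ := by linarith
    _ = _ := (sum_sum_mul_ite_sub_mul_eq_quadFormP K u ξ).symm

/-- ξᵀ P(u) ξ ≥ κ Σ_j ξ_j²/u_j on the tangent space, κ = min_{i≠j} K_{ij}. -/
theorem stmt_2 (n : ℕ) (K : Matrix (Fin (n+1)) (Fin (n+1)) ℝ)
    (hdiag : ∀ i, K i i = 0) (hsym : ∀ i j, K i j = K j i)
    (hnn : ∀ i j, i ≠ j → 0 ≤ K i j)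
    (u : Fin (n+1) → ℝ) (hpos : ∀ i, 0 < u i) (hsum : ∑ i, u i = 1)
    (ξ : Fin (n+1) → ℝ) (htan : ∑ i, ξ i = 0) :
    ∑ i, ∑ j, ξ i * ((if i = j then (1 / u j) * ∑ k, K i k * u k else 0) - K i j) * ξ j
      ≥ sInf {x : ℝ | ∃ i j, i ≠ j ∧ x = K i j} * ∑ j, (ξ j)^2 / u j :=
  stmt_2_general n K hsym u hpos hsum ξ htan
end

section
/- Assume K_{ij} = K_{ji} ≥ 0 for i ≠ j, K_{ii} = 0, and let κ = min_{i≠j} K_{ij}. Let Ψ : D → S, Ψ(U) = (1 − Σ_{i=1}^n U_i, U_1, …, U_n), and for u ∈ S let P(u)_{kl} = δ_{kl}(1/u_l) Σ_m K_{km} u_m − K_{kl}. Then for every U ∈ D and ζ ∈ ℝ^n, setting ξ = DΨ ζ ∈ ℝ^{n+1} (i.e. ξ_0 = −Σ_l ζ_l, ξ_i = ζ_i for i ≥ 1), one has ξᵀ P(Ψ(U)) ξ ≥ κ ( |Σ_{l=1}^n ζ_l|² + Σ_{i=1}^n ζ_i²/U_i ). -/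
private lemma P_expand {m : ℕ} (A : Matrix (Fin m) (Fin m) ℝ) (u ξ : Fin m → ℝ) :
    ∑ i, ∑ j, ξ i * ((if i = j then (1 / u j) * ∑ k, A i k * u k else 0) - A i j) * ξ j
      = (∑ i, ξ i ^ 2 / u i * ∑ j, A i j * u j) - ∑ i, ∑ j, A i j * ξ i * ξ j := by
  rw [← Finset.sum_sub_distrib]
  refine Finset.sum_congr rfl fun i _ => ?_
  have h : ∀ j, ξ i * ((if i = j then (1 / u j) * ∑ k, A i k * u k else 0) - A i j) * ξ j
      = (if i = j then ξ i * ((1 / u j) * ∑ k, A i k * u k) * ξ j else 0) - A i j * ξ i * ξ j := by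
    intro j; split <;> ring
  simp only [h, Finset.sum_sub_distrib, Finset.sum_ite_eq, Finset.mem_univ, if_true]
  ring

private lemma sum_quad {m : ℕ} (A : Matrix (Fin m) (Fin m) ℝ) (hsym : ∀ i j, A i j = A j i)
    (u ξ : Fin m → ℝ) (hu : ∀ k, u k ≠ 0) :
    ∑ i, ∑ j, A i j * u i * u j * (ξ i / u i - ξ j / u j) ^ 2
      = 2 * ((∑ i, ξ i ^ 2 / u i * ∑ j, A i j * u j) - ∑ i, ∑ j, A i j * ξ i * ξ j) := by
  have expand : ∀ i j, A i j * u i * u j * (ξ i / u i - ξ j / u j) ^ 2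
      = A i j * u j * (ξ i ^ 2 / u i) + A i j * u i * (ξ j ^ 2 / u j)
        - 2 * (A i j * ξ i * ξ j) := by
    intro i j
    field_simp [hu i, hu j]
    ring
  have h1 : ∑ i, ∑ j, A i j * u j * (ξ i ^ 2 / u i) = ∑ i, ξ i ^ 2 / u i * ∑ j, A i j * u j := by
    refine Finset.sum_congr rfl fun i _ => ?_
    rw [Finset.mul_sum]
    exact Finset.sum_congr rfl fun j _ => by ring
  have h2 : ∑ i, ∑ j, A i j * u i * (ξ j ^ 2 / u j) = ∑ i, ξ i ^ 2 / u i * ∑ j, A i j * u j := by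
    rw [Finset.sum_comm]
    refine Finset.sum_congr rfl fun j _ => ?_
    rw [Finset.mul_sum]
    refine Finset.sum_congr rfl fun i _ => ?_
    rw [hsym i j]; ring
  have h3 : ∑ i, ∑ j, (2 : ℝ) * (A i j * ξ i * ξ j) = 2 * ∑ i, ∑ j, A i j * ξ i * ξ j := by
    rw [Finset.mul_sum]
    refine Finset.sum_congr rfl fun i _ => ?_
    rw [Finset.mul_sum]
  simp only [expand, Finset.sum_sub_distrib, Finset.sum_add_distrib]
  rw [h1, h2, h3]
  ring

/-- with ξ = DΨ ζ (ξ_0 = −Σ ζ_l, ξ_i = ζ_i), one has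
ξᵀ P(Ψ(U)) ξ ≥ κ (|Σ ζ_l|² + Σ ζ_i²/U_i), κ = min_{i≠j} K_{ij}. -/
theorem stmt_6 (n : ℕ) (hn : 1 ≤ n) (K : Matrix (Fin (n+1)) (Fin (n+1)) ℝ)
    (hdiag : ∀ i, K i i = 0) (hsym : ∀ i j, K i j = K j i)
    (hnn : ∀ i j, i ≠ j → 0 ≤ K i j)
    (U : Fin n → ℝ) (hpos : ∀ i, 0 < U i) (hsum : ∑ i, U i < 1)
    (ζ : Fin n → ℝ) :
    (let u : Fin (n+1) → ℝ := Fin.cons (1 - ∑ i, U i) U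
     let ξ : Fin (n+1) → ℝ := Fin.cons (-∑ l, ζ l) ζ
     ∑ i, ∑ j, ξ i * ((if i = j then (1 / u j) * ∑ k, K i k * u k else 0) - K i j) * ξ j)
      ≥ sInf {x : ℝ | ∃ i j, i ≠ j ∧ x = K i j} *
          ((∑ l, ζ l)^2 + ∑ i, (ζ i)^2 / U i) := by
  dsimp only
  set u : Fin (n+1) → ℝ := Fin.cons (1 - ∑ i, U i) U with hu_def
  set ξ : Fin (n+1) → ℝ := Fin.cons (-∑ l, ζ l) ζ with hξ_def
  set κ : ℝ := sInf {x : ℝ | ∃ i j, i ≠ j ∧ x = K i j} with hκ_def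
  -- basic facts about u and ξ
  have hupos : ∀ k, 0 < u k := by
    intro k
    refine Fin.cases ?_ ?_ k
    · rw [hu_def]; simp only [Fin.cons_zero]; linarith
    · intro i; rw [hu_def]; simp only [Fin.cons_succ]; exact hpos i
  have hune : ∀ k, u k ≠ 0 := fun k => (hupos k).ne'
  have hsumu : ∑ k, u k = 1 := by
    rw [hu_def, Fin.sum_cons]; ring
  have hsumξ : ∑ k, ξ k = 0 := by
    rw [hξ_def, Fin.sum_cons]; ring
  -- facts about κ
  have h01 : (0 : Fin (n+1)) ≠ Fin.last n := by
    intro h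
    have := congrArg (Fin.val) h
    simp [Fin.val_last] at this
    omega
  have hne : Set.Nonempty {x : ℝ | ∃ i j, i ≠ j ∧ x = K i j} :=
    ⟨K 0 (Fin.last n), 0, Fin.last n, h01, rfl⟩
  have hbdd : BddBelow {x : ℝ | ∃ i j, i ≠ j ∧ x = K i j} := by
    refine ⟨0, ?_⟩
    rintro x ⟨i, j, hij, rfl⟩
    exact hnn i j hij
  have hκ_le : ∀ i j, i ≠ j → κ ≤ K i j := fun i j h => csInf_le hbdd ⟨i, j, h, rfl⟩
  have hκ_nonneg : 0 ≤ κ := by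
    refine le_csInf hne ?_
    rintro x ⟨i, j, hij, rfl⟩
    exact hnn i j hij
  -- the key identities
  have hP := P_expand K u ξ
  have hK := sum_quad K hsym u ξ hune
  have hOne := sum_quad (Matrix.of fun _ _ => (1:ℝ)) (fun _ _ => rfl) u ξ hune
  simp only [Matrix.of_apply, one_mul] at hOne
  rw [hsumu] at hOne
  have hzero : ∑ i, ∑ j, ξ i * ξ j = 0 := by
    have : ∀ i : Fin (n+1), ∑ j, ξ i * ξ j = 0 := by
      intro i
      rw [← Finset.mul_sum, hsumξ, mul_zero]
    simp [this]
  rw [hzero] at hOne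
  simp only [mul_one, sub_zero] at hOne
  -- hOne : ∑ i, ∑ j, u i * u j * (ξ i / u i - ξ j / u j) ^ 2 = 2 * ∑ i, ξ i ^ 2 / u i
  -- termwise bound
  have term : ∀ i j : Fin (n+1), κ * (u i * u j * (ξ i / u i - ξ j / u j) ^ 2)
      ≤ K i j * u i * u j * (ξ i / u i - ξ j / u j) ^ 2 := by
    intro i j
    rcases eq_or_ne i j with h | h
    · subst h; simp [sub_self]
    · have h2 : 0 ≤ u i * u j * (ξ i / u i - ξ j / u j) ^ 2 :=
        mul_nonneg (mul_nonneg (hupos i).le (hupos j).le) (sq_nonneg _)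
      calc κ * (u i * u j * (ξ i / u i - ξ j / u j) ^ 2)
          ≤ K i j * (u i * u j * (ξ i / u i - ξ j / u j) ^ 2) :=
            mul_le_mul_of_nonneg_right (hκ_le i j h) h2
        _ = K i j * u i * u j * (ξ i / u i - ξ j / u j) ^ 2 := by ring
  have hsumle : κ * ∑ i, ∑ j, u i * u j * (ξ i / u i - ξ j / u j) ^ 2
      ≤ ∑ i, ∑ j, K i j * u i * u j * (ξ i / u i - ξ j / u j) ^ 2 := by
    rw [Finset.mul_sum]
    refine Finset.sum_le_sum fun i _ => ?_
    rw [Finset.mul_sum]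
    exact Finset.sum_le_sum fun j _ => term i j
  -- κ * ∑ ξ²/u ≤ LHS
  have hmain : κ * ∑ i, ξ i ^ 2 / u i
      ≤ ∑ i, ∑ j, ξ i * ((if i = j then (1 / u j) * ∑ k, K i k * u k else 0) - K i j) * ξ j := by
    rw [hP]
    rw [hOne] at hsumle
    rw [hK] at hsumle
    linarith
  -- compute ∑ ξ²/u
  have hsplit : ∑ k, ξ k ^ 2 / u k = (∑ l, ζ l) ^ 2 / (1 - ∑ i, U i) + ∑ i, (ζ i) ^ 2 / U i := by
    rw [Fin.sum_univ_succ]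
    rw [hu_def, hξ_def]
    simp only [Fin.cons_zero, Fin.cons_succ, neg_sq]
  have hUnn : (0:ℝ) ≤ ∑ i, U i := Finset.sum_nonneg fun i _ => (hpos i).le
  have hc : 0 < 1 - ∑ i, U i := by linarith
  have hdivge : (∑ l, ζ l) ^ 2 ≤ (∑ l, ζ l) ^ 2 / (1 - ∑ i, U i) := by
    rw [le_div_iff₀ hc]
    have := sq_nonneg (∑ l, ζ l)
    nlinarith
  have hR : (∑ l, ζ l) ^ 2 + ∑ i, (ζ i) ^ 2 / U i ≤ ∑ k, ξ k ^ 2 / u k := by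
    rw [hsplit]; linarith
  have := mul_le_mul_of_nonneg_left hR hκ_nonneg
  linarith
end

section
/- Suppose K is symmetric with zero diagonal. Then the mobility matrix M(u), with M_{il}(u) = u_i(δ_{il} Σ_k K_{ik} u_k − K_{il} u_l), is positive semi-definite for every u in the closed simplex if and only if K_{ij} ≥ 0 for all i ≠ j. -/
/-- for K symmetric with zero diagonal, M(u) is positive semi-definite
for every u in the closed simplex iff K_{ij} ≥ 0 for all i ≠ j. -/
theorem stmt_10 (n : ℕ) (hn : 1 ≤ n) (K : Matrix (Fin (n+1)) (Fin (n+1)) ℝ)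
    (hdiag : ∀ i, K i i = 0) (hsym : ∀ i j, K i j = K j i) :
    (∀ u : Fin (n+1) → ℝ, (∀ i, 0 ≤ u i) → ∑ i, u i = 1 →
        ∀ ξ : Fin (n+1) → ℝ,
          0 ≤ ∑ i, ∑ l, ξ i *
              (u i * ((if i = l then ∑ k, K i k * u k else 0) - K i l * u l)) * ξ l)
      ↔ (∀ i j, i ≠ j → 0 ≤ K i j) := by
  constructor
  · intro h i j hij
    set u : Fin (n+1) → ℝ :=
      fun k => (if k = i then (1:ℝ)/2 else 0) + (if k = j then (1:ℝ)/2 else 0) with hu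
    have hu0 : ∀ k, 0 ≤ u k := by
      intro k; simp only [hu]; positivity
    have hu1 : ∑ k, u k = 1 := by
      simp [hu, Finset.sum_add_distrib]
      norm_num
    have hξ := h u hu0 hu1 (fun k => if k = i then 1 else 0)
    have hQ : (∑ a, ∑ l, (if a = i then (1:ℝ) else 0) *
        (u a * ((if a = l then ∑ k, K a k * u k else 0) - K a l * u l)) * (if l = i then 1 else 0))
        = K i j / 4 := by
      rw [Finset.sum_eq_single i]
      · rw [Finset.sum_eq_single i]
        · simp [hu, hdiag, hij, mul_add, mul_ite, Finset.sum_add_distrib]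
          ring
        · intro b _ hb; simp [hb]
        · intro hb; exact absurd (Finset.mem_univ i) hb
      · intro b _ hb; simp [hb]
      · intro hb; exact absurd (Finset.mem_univ i) hb
    rw [hQ] at hξ
    linarith
  · intro hK u hu0 _ ξ
    set S := ∑ a, ∑ l, ξ a *
        (u a * ((if a = l then ∑ k, K a k * u k else 0) - K a l * u l)) * ξ l with hSdef
    have hS : S = ∑ a, ∑ l, K a l * u a * u l * (ξ a ^ 2 - ξ a * ξ l) := by
      rw [hSdef]
      refine Finset.sum_congr rfl fun a _ => ?_
      have h1 : (∑ l, ξ a * (u a * ((if a = l then ∑ k, K a k * u k else 0) - K a l * u l)) * ξ l)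
          = ∑ l, ((if a = l then (∑ k, K a k * u k) * (ξ a * u a * ξ a) else 0)
              - K a l * u a * u l * ξ a * ξ l) := by
        refine Finset.sum_congr rfl fun l _ => ?_
        by_cases h : a = l
        · subst h; rw [if_pos rfl, if_pos rfl]; ring
        · rw [if_neg h, if_neg h]; ring
      rw [h1, Finset.sum_sub_distrib, Finset.sum_ite_eq]
      simp only [Finset.mem_univ, if_true, Finset.sum_mul, Finset.mul_sum]
      rw [← Finset.sum_sub_distrib]
      refine Finset.sum_congr rfl fun l _ => ?_
      ring
    have hS2 : S = ∑ a, ∑ l, K a l * u a * u l * (ξ l ^ 2 - ξ a * ξ l) := by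
      rw [hS, Finset.sum_comm]
      refine Finset.sum_congr rfl fun a _ => Finset.sum_congr rfl fun l _ => ?_
      rw [hsym a l]; ring
    have hT : 0 ≤ ∑ a, ∑ l, K a l * u a * u l * (ξ a - ξ l)^2 := by
      refine Finset.sum_nonneg fun a _ => Finset.sum_nonneg fun l _ => ?_
      by_cases h : a = l
      · subst h; simp [hdiag]
      · exact mul_nonneg (mul_nonneg (mul_nonneg (hK a l h) (hu0 a)) (hu0 l)) (sq_nonneg _)
    have h2S : 2 * S = ∑ a, ∑ l, K a l * u a * u l * (ξ a - ξ l)^2 := by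
      rw [two_mul]
      nth_rewrite 1 [hS]
      rw [hS2, ← Finset.sum_add_distrib]
      refine Finset.sum_congr rfl fun a _ => ?_
      rw [← Finset.sum_add_distrib]
      refine Finset.sum_congr rfl fun l _ => ?_
      ring
    linarith
end

section
/- Assume K symmetric with zero diagonal, K_{ij} > 0 for all i ≠ j, and let κ = min_{i≠j} K_{ij} > 0. Then for all U ∈ D and ζ ∈ ℝ^n, ζᵀ D²ĥ(U) Â(U) ζ ≥ κ Σ_{i=1}^n ζ_i²/U_i, where Â(U) = M̂(U) D²ĥ(U) is given by Â_{ij}(U) = δ_{ij}[Σ_{l=1}^n K_{il}U_l + K_{i0}(1 − Σ_l U_l)] − (K_{ij} − K_{i0}) U_i for i,j ∈ {1,…,n}. -/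
/-!
With `x i = ζ i / U i`, `v = 1 - ∑ U` and `η = D²ĥ(U) ζ`, the quadratic form is
`½ ∑ᵢⱼ K_{ij} U_i U_j (x_i - x_j)² + ∑ᵢ K_{i0} U_i v η_i²`, a sum of nonnegative terms, each
linear in `K`. Lowering every off-diagonal `K_{ij}` to `κ` therefore lowers the form, and for
constant `K = κ` the matrix `Â(U)` is `κ • 1`, so the form becomes
`κ ζᵀ D²ĥ(U) ζ = κ (∑ ζ_i² / U_i + (∑ ζ_i)² / v)`.
-/

open Finset Matrix

theorem sum_sum_mul_add_mul_sub_of_symm {ι : Type*} [Fintype ι] (W : ι → ι → ℝ)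
    (hW : ∀ i j, W i j = W j i) (x : ι → ℝ) (c : ℝ) :
    ∑ i, ∑ j, W i j * (x i + c) * (x i - x j) = (1 / 2) * ∑ i, ∑ j, W i j * (x i - x j) ^ 2 := by
  have hswap : ∑ i, ∑ j, W i j * (x i + c) * (x i - x j)
      = ∑ i, ∑ j, W i j * (x j + c) * (x j - x i) := by
    rw [Finset.sum_comm]
    exact sum_congr rfl fun i _ => sum_congr rfl fun j _ => by rw [hW]
  have hsum : ∑ i, ∑ j, W i j * (x i + c) * (x i - x j)
      + ∑ i, ∑ j, W i j * (x j + c) * (x j - x i) = ∑ i, ∑ j, W i j * (x i - x j) ^ 2 := by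
    rw [← sum_add_distrib]
    refine sum_congr rfl fun i _ => ?_
    rw [← sum_add_distrib]
    exact sum_congr rfl fun j _ => by ring
  linarith

noncomputable section CrossDiffusion

variable {ι : Type*} [Fintype ι] [DecidableEq ι]

/-- `D²ĥ(U)`, where `v` stands for `1 - ∑ U`. -/
def entropyHessian (U : ι → ℝ) (v : ℝ) : Matrix ι ι ℝ :=
  Matrix.of fun i j => (if i = j then 1 / U i else 0) + 1 / v

/-- `Â(U)`, with species `0` eliminated: `A i j = K_{i+1,j+1}`, `b i = K_{i+1,0}` and
`v` stands for `1 - ∑ U`. -/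
def diffusionMatrix (A : ι → ι → ℝ) (b U : ι → ℝ) (v : ℝ) : Matrix ι ι ℝ :=
  Matrix.of fun i j => (if i = j then ∑ l, A i l * U l + b i * v else 0) - (A i j - b i) * U i

theorem vecMul_entropyHessian (U ζ : ι → ℝ) (v : ℝ) :
    ζ ᵥ* entropyHessian U v = fun i => ζ i / U i + (∑ j, ζ j) / v := by
  ext i
  simp [vecMul, dotProduct, entropyHessian, mul_add, sum_add_distrib, sum_mul, div_eq_mul_inv]

theorem diffusionMatrix_mulVec_mul (A : ι → ι → ℝ) (b U x : ι → ℝ) (v : ℝ) :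
    diffusionMatrix A b U v *ᵥ (fun j => U j * x j)
      = fun i => U i * (∑ j, A i j * U j * (x i - x j) + b i * (v * x i + ∑ j, U j * x j)) := by
  ext i
  have hsum_sub : ∑ j, A i j * U j * (x i - x j)
      = (∑ j, A i j * U j) * x i - ∑ j, A i j * (U j * x j) := by
    rw [sum_mul, ← sum_sub_distrib]
    exact sum_congr rfl fun _ _ => by ring
  have hsum_cross : ∑ j, (A i j - b i) * U i * (U j * x j)
      = U i * ∑ j, A i j * (U j * x j) - b i * U i * ∑ j, U j * x j := by
    rw [mul_sum, mul_sum, ← sum_sub_distrib]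
    exact sum_congr rfl fun _ _ => by ring
  simp only [mulVec, dotProduct, diffusionMatrix, of_apply]
  rw [sum_congr rfl fun j _ => sub_mul _ _ _, sum_sub_distrib, hsum_cross, hsum_sub]
  simp only [ite_mul, zero_mul, sum_ite_eq, mem_univ, if_true]
  ring

theorem diffusionMatrix_const (U : ι → ℝ) {v : ℝ} (hv : v + ∑ i, U i = 1) (c : ℝ) :
    diffusionMatrix (fun _ _ => c) (fun _ => c) U v = c • 1 := by
  ext i j
  have hc : ∑ l, c * U l + c * v = c := by rw [← mul_sum, ← mul_add, add_comm, hv, mul_one]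
  by_cases hij : i = j <;> simp [diffusionMatrix, hij, hc]

theorem vecMul_entropyHessian_dotProduct (U ζ : ι → ℝ) (v : ℝ) :
    (ζ ᵥ* entropyHessian U v) ⬝ᵥ ζ = ∑ i, ζ i ^ 2 / U i + (∑ i, ζ i) ^ 2 / v := by
  simp only [vecMul_entropyHessian, dotProduct, add_mul, sum_add_distrib, ← mul_sum]
  congr 1
  · exact sum_congr rfl fun i _ => by ring
  · ring

theorem vecMul_entropyHessian_dotProduct_diffusionMatrix_mulVec {U : ι → ℝ} {v : ℝ}
    (hU : ∀ i, U i ≠ 0) (hv : v ≠ 0) {A : ι → ι → ℝ} (hA : ∀ i j, A i j = A j i) (b ζ : ι → ℝ) :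
    (ζ ᵥ* entropyHessian U v) ⬝ᵥ (diffusionMatrix A b U v *ᵥ ζ)
      = (1 / 2) * ∑ i, ∑ j, A i j * U i * U j * (ζ i / U i - ζ j / U j) ^ 2
        + ∑ i, b i * U i * v * (ζ i / U i + (∑ j, ζ j) / v) ^ 2 := by
  set x : ι → ℝ := fun i => ζ i / U i
  set s := ∑ j, ζ j
  have hζ : ζ = fun i => U i * x i := funext fun i => (mul_div_cancel₀ (ζ i) (hU i)).symm
  have hs : ∑ j, U j * x j = s := by rw [← hζ]
  calc (ζ ᵥ* entropyHessian U v) ⬝ᵥ (diffusionMatrix A b U v *ᵥ ζ)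
      = ∑ i, (x i + s / v) * (U i * (∑ j, A i j * U j * (x i - x j) + b i * (v * x i + s))) := by
        rw [vecMul_entropyHessian]
        conv_lhs => arg 2; rw [hζ, diffusionMatrix_mulVec_mul, hs]
        rfl
    _ = ∑ i, ∑ j, A i j * U i * U j * (x i + s / v) * (x i - x j)
          + ∑ i, b i * U i * v * (x i + s / v) ^ 2 := by
        rw [← sum_add_distrib]
        refine sum_congr rfl fun i _ => ?_
        rw [mul_add (U i), mul_sum, mul_add, mul_sum]
        congr 1
        · exact sum_congr rfl fun j _ => by ring
        · field_simp
    _ = _ := by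
        rw [sum_sum_mul_add_mul_sub_of_symm (fun i j => A i j * U i * U j)
          (fun i j => by rw [hA]; ring)]

theorem mul_sum_sq_div_le_vecMul_entropyHessian_dotProduct_mulVec {U : ι → ℝ} {v : ℝ}
    (hU : ∀ i, 0 < U i) (hv : 0 < v) (hUv : v + ∑ i, U i = 1)
    {A : ι → ι → ℝ} (hA : ∀ i j, A i j = A j i) {b : ι → ℝ} {κ : ℝ} (hκ : 0 ≤ κ)
    (hAκ : ∀ i j, i ≠ j → κ ≤ A i j) (hbκ : ∀ i, κ ≤ b i) (ζ : ι → ℝ) :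
    κ * ∑ i, ζ i ^ 2 / U i ≤ (ζ ᵥ* entropyHessian U v) ⬝ᵥ (diffusionMatrix A b U v *ᵥ ζ) := by
  have hU0 i := (hU i).ne'
  have hconst := vecMul_entropyHessian_dotProduct_diffusionMatrix_mulVec hU0 hv.ne'
    (A := fun _ _ => κ) (fun _ _ => rfl) (fun _ => κ) ζ
  rw [diffusionMatrix_const U hUv, smul_mulVec, one_mulVec, dotProduct_smul, smul_eq_mul,
    vecMul_entropyHessian_dotProduct] at hconst
  calc κ * ∑ i, ζ i ^ 2 / U i ≤ κ * (∑ i, ζ i ^ 2 / U i + (∑ i, ζ i) ^ 2 / v) := by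
        gcongr
        exact le_add_of_nonneg_right (by positivity)
    _ = _ := hconst
    _ ≤ _ := by
        rw [vecMul_entropyHessian_dotProduct_diffusionMatrix_mulVec hU0 hv.ne' hA]
        refine add_le_add (mul_le_mul_of_nonneg_left ?_ one_half_pos.le) (sum_le_sum fun i _ => ?_)
        · refine sum_le_sum fun i _ => sum_le_sum fun j _ => ?_
          obtain rfl | hij := eq_or_ne i j
          · simp
          · have := hU i; have := hU j
            gcongr
            exact hAκ i j hij
        · have := hU i
          gcongr
          exact hbκ i

end CrossDiffusion

theorem stmt_14_general (n : ℕ) (K : Matrix (Fin (n+1)) (Fin (n+1)) ℝ)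
    (hsym : ∀ i j, K i j = K j i)
    (hposK : ∀ i j, i ≠ j → 0 < K i j)
    (U : Fin n → ℝ) (hpos : ∀ i, 0 < U i) (hsum : ∑ i, U i < 1)
    (ζ : Fin n → ℝ) :
    let Ahat : Matrix (Fin n) (Fin n) ℝ :=
      Matrix.of fun i j =>
        (if i = j then (∑ l, K i.succ l.succ * U l) + K i.succ 0 * (1 - ∑ l, U l) else 0)
          - (K i.succ j.succ - K i.succ 0) * U i
    let Hhat : Matrix (Fin n) (Fin n) ℝ :=
      Matrix.of fun i j => (if i = j then 1 / U i else 0) + 1 / (1 - ∑ k, U k)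
    dotProduct ζ ((Hhat * Ahat).mulVec ζ)
      ≥ sInf {x : ℝ | ∃ i j, i ≠ j ∧ x = K i j} * ∑ i, (ζ i)^2 / U i := by
  intro Ahat Hhat
  have hoff_nonneg : ∀ x ∈ {x : ℝ | ∃ i j, i ≠ j ∧ x = K i j}, 0 ≤ x := by
    rintro _ ⟨i, j, hij, rfl⟩
    exact (hposK i j hij).le
  have hκ : ∀ i j, i ≠ j → sInf {x : ℝ | ∃ i j, i ≠ j ∧ x = K i j} ≤ K i j :=
    fun i j hij => csInf_le ⟨0, hoff_nonneg⟩ ⟨i, j, hij, rfl⟩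
  rw [ge_iff_le, ← mulVec_mulVec, dotProduct_mulVec]
  exact mul_sum_sq_div_le_vecMul_entropyHessian_dotProduct_mulVec (A := fun i j => K i.succ j.succ)
    (b := fun i => K i.succ 0) hpos (by linarith) (by ring) (fun i j => hsym _ _)
    (Real.sInf_nonneg hoff_nonneg) (fun i j hij => hκ _ _ ((Fin.succ_injective _).ne hij))
    (fun i => hκ _ _ (Fin.succ_ne_zero i)) ζ

/-- under full interaction (K_{ij} > 0 for i ≠ j),
ζᵀ D²ĥ(U) Â(U) ζ ≥ κ Σ ζ_i²/U_i on D, with κ = min_{i≠j} K_{ij} and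
Â_{ij}(U) = δ_{ij}[Σ_l K_{il}U_l + K_{i0}(1−ΣU)] − (K_{ij}−K_{i0})U_i. -/
theorem stmt_14 (n : ℕ) (hn : 1 ≤ n) (K : Matrix (Fin (n+1)) (Fin (n+1)) ℝ)
    (hdiag : ∀ i, K i i = 0) (hsym : ∀ i j, K i j = K j i)
    (hposK : ∀ i j, i ≠ j → 0 < K i j)
    (U : Fin n → ℝ) (hpos : ∀ i, 0 < U i) (hsum : ∑ i, U i < 1)
    (ζ : Fin n → ℝ) :
    let Ahat : Matrix (Fin n) (Fin n) ℝ :=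
      Matrix.of fun i j =>
        (if i = j then (∑ l, K i.succ l.succ * U l) + K i.succ 0 * (1 - ∑ l, U l) else 0)
          - (K i.succ j.succ - K i.succ 0) * U i
    let Hhat : Matrix (Fin n) (Fin n) ℝ :=
      Matrix.of fun i j => (if i = j then 1 / U i else 0) + 1 / (1 - ∑ k, U k)
    dotProduct ζ ((Hhat * Ahat).mulVec ζ)
      ≥ sInf {x : ℝ | ∃ i j, i ≠ j ∧ x = K i j} * ∑ i, (ζ i)^2 / U i :=
  stmt_14_general n K hsym hposK U hpos hsum ζ
end

section
/- Assume K symmetric with zero diagonal and K_{ij} > 0 for all i ≠ j. Then for every U ∈ D, the reduced mobility matrix M̂(U) = Â(U)(D²ĥ(U))^{-1} is symmetric positive definite, and consequently every eigenvalue of the diffusion matrix Â(U) = M̂(U) D²ĥ(U) has positive real part. -/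
/-!
Put `u₀ = 1 - ∑ Uᵢ` and, for `ζ ∈ ℝⁿ`, let `x₀ = -(∑ ζᵢ) / u₀`, `xᵢ = ζᵢ / Uᵢ` be the entropy
variables of the full `(n+1)`-species system. Then `(D²ĥ ζ)ᵢ = xᵢ - x₀` and
`(Â ζ)ᵢ = ∑ⱼ Kᵢⱼ uᵢ uⱼ (xᵢ - xⱼ)`, so, with `y` the entropy variables of `η`, `ηᵀ D²ĥ Â ζ` is
the Dirichlet form `½ ∑ᵢⱼ Kᵢⱼ uᵢ uⱼ (yᵢ - yⱼ)(xᵢ - xⱼ)` of the complete graph with weights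
`Kᵢⱼ uᵢ uⱼ`.
Hence `D²ĥ Â` is symmetric positive definite: `x` is constant only for `ζ = 0`, because
`∑ₖ uₖ xₖ = 0`. The mobility `Â (D²ĥ)⁻¹ = (D²ĥ)⁻¹ (D²ĥ Â) (D²ĥ)⁻¹` is a congruence of it, and an
eigenpair `Â v = μ v` gives `v* (D²ĥ Â) v = μ v* D²ĥ v` with both forms positive.
-/

open Matrix Finset
open scoped ComplexOrder MatrixOrder

namespace Matrix

variable {n : Type*} [Fintype n] [DecidableEq n]

theorem PosDef.map_ofReal {M : Matrix n n ℝ} (hM : M.PosDef) :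
    (M.map ((↑) : ℝ → ℂ)).PosDef := by
  obtain ⟨R, rfl⟩ := CStarAlgebra.nonneg_iff_eq_star_mul_self.mp hM.posSemidef.nonneg
  have hpsd : ((star R * R).map ((↑) : ℝ → ℂ)).PosSemidef := by
    change ((star R * R).map Complex.ofRealHom).PosSemidef
    rw [Matrix.map_mul, star_eq_conjTranspose,
      conjTranspose_map (A := R) Complex.ofRealHom fun _ => (Complex.conj_ofReal _).symm]
    exact posSemidef_conjTranspose_mul_self _
  have hdet : ((star R * R).map ((↑) : ℝ → ℂ)).det = ((star R * R).det : ℂ) :=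
    (RingHom.map_det Complex.ofRealHom _).symm
  rw [hpsd.posDef_iff_det_ne_zero, hdet, Complex.ofReal_ne_zero]
  exact ((isUnit_iff_isUnit_det _).mp hM.isUnit).ne_zero

theorem IsSymm.of_dotProduct_mulVec_comm {R : Type*} [CommSemiring R] {M : Matrix n n R}
    (h : ∀ x y : n → R, x ⬝ᵥ M *ᵥ y = y ⬝ᵥ M *ᵥ x) : M.IsSymm :=
  IsSymm.ext fun i j => by
    simpa [mulVec_single_one, single_one_dotProduct] using (h (Pi.single i 1) (Pi.single j 1)).symm

variable {𝕜 : Type*} [RCLike 𝕜] {H A : Matrix n n 𝕜}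

theorem PosDef.mul_inv_of_posDef_mul (hH : H.PosDef) (hHA : (H * A).PosDef) :
    (A * H⁻¹).PosDef := by
  have hconj : A * H⁻¹ = star H⁻¹ * (H * A) * H⁻¹ := by
    rw [star_eq_conjTranspose, hH.inv.isHermitian.eq, ← Matrix.mul_assoc,
      nonsing_inv_mul _ ((isUnit_iff_isUnit_det H).mp hH.isUnit), Matrix.one_mul]
  rw [hconj]
  exact (IsUnit.posDef_star_left_conjugate_iff (isUnit_nonsing_inv_iff.mpr hH.isUnit)).mpr hHA

theorem pos_of_mem_spectrum_of_posDef_mul (hH : H.PosDef) (hHA : (H * A).PosDef) {μ : 𝕜}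
    (hμ : μ ∈ spectrum 𝕜 A) : 0 < μ := by
  rw [← spectrum_toLin', ← Module.End.hasEigenvalue_iff_mem_spectrum] at hμ
  obtain ⟨v, hv, hv0⟩ := hμ.exists_hasEigenvector
  rw [Module.End.mem_eigenspace_iff, toLin'_apply] at hv
  have hform : star v ⬝ᵥ (H * A) *ᵥ v = μ * (star v ⬝ᵥ H *ᵥ v) := by
    rw [← mulVec_mulVec, hv, mulVec_smul, dotProduct_smul, smul_eq_mul]
  have hHA_pos := hHA.dotProduct_mulVec_pos hv0
  rw [hform] at hHA_pos
  exact (pos_iff_pos_of_mul_pos hHA_pos).mpr (hH.dotProduct_mulVec_pos hv0)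

end Matrix

section DirichletForm

variable {ι : Type*} [Fintype ι] (w : ι → ι → ℝ)

noncomputable def dirichletForm (y x : ι → ℝ) : ℝ :=
  (∑ i, ∑ j, w i j * ((y i - y j) * (x i - x j))) / 2

variable {w}

theorem dirichletForm_comm (y x : ι → ℝ) : dirichletForm w y x = dirichletForm w x y := by
  simp only [dirichletForm, mul_comm (y _ - y _)]

theorem sum_sub_mul_sum_eq_dirichletForm (hw : ∀ i j, w i j = w j i) (y x : ι → ℝ) (c : ℝ) :
    ∑ i, (y i - c) * ∑ j, w i j * (x i - x j) = dirichletForm w y x := by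
  have hswap : ∑ i, ∑ j, (y i - c) * (w i j * (x i - x j))
      = -∑ i, ∑ j, (y j - c) * (w i j * (x i - x j)) := by
    rw [Finset.sum_comm, ← Finset.sum_neg_distrib]
    refine Finset.sum_congr rfl fun i _ => ?_
    rw [← Finset.sum_neg_distrib]
    refine Finset.sum_congr rfl fun j _ => ?_
    rw [hw]; ring
  simp only [dirichletForm, Finset.mul_sum]
  rw [eq_div_iff two_ne_zero, mul_two]
  nth_rewrite 2 [hswap]
  rw [← sub_eq_add_neg, ← Finset.sum_sub_distrib]
  refine Finset.sum_congr rfl fun i _ => ?_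
  rw [← Finset.sum_sub_distrib]
  exact Finset.sum_congr rfl fun j _ => by ring

theorem dirichletForm_self_pos (hw : ∀ i j, i ≠ j → 0 < w i j) {x : ι → ℝ}
    (hx : ∃ i j, x i ≠ x j) : 0 < dirichletForm w x x := by
  obtain ⟨i, j, hij⟩ := hx
  have hterm : ∀ k l, 0 ≤ w k l * ((x k - x l) * (x k - x l)) := by
    intro k l
    rcases eq_or_ne k l with rfl | hkl
    · simp
    · exact mul_nonneg (hw k l hkl).le (mul_self_nonneg _)
  refine div_pos (Finset.sum_pos' (fun k _ => Finset.sum_nonneg fun l _ => hterm k l)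
    ⟨i, mem_univ _, Finset.sum_pos' (fun l _ => hterm i l) ⟨j, mem_univ _, ?_⟩⟩) two_pos
  have hne : i ≠ j := fun h => hij (congrArg x h)
  exact mul_pos (hw i j hne) (mul_self_pos.mpr (sub_ne_zero.mpr hij))

end DirichletForm

section ReducedSystem

variable {n : ℕ}

noncomputable def reducedDiffusion (K : Matrix (Fin (n+1)) (Fin (n+1)) ℝ) (U : Fin n → ℝ) :
    Matrix (Fin n) (Fin n) ℝ :=
  Matrix.of fun i j =>
    (if i = j then (∑ l, K i.succ l.succ * U l) + K i.succ 0 * (1 - ∑ l, U l) else 0)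
      - (K i.succ j.succ - K i.succ 0) * U i

noncomputable def reducedHessian (U : Fin n → ℝ) : Matrix (Fin n) (Fin n) ℝ :=
  Matrix.of fun i j => (if i = j then 1 / U i else 0) + 1 / (1 - ∑ k, U k)

def fullConc (U : Fin n → ℝ) : Fin (n+1) → ℝ := Fin.cons (1 - ∑ i, U i) U

noncomputable def fullPotential (U ζ : Fin n → ℝ) : Fin (n+1) → ℝ :=
  Fin.cons (-(∑ i, ζ i) / (1 - ∑ i, U i)) fun i => ζ i / U i

theorem reducedHessian_mulVec (U ζ : Fin n → ℝ) (i : Fin n) :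
    (reducedHessian U *ᵥ ζ) i = fullPotential U ζ i.succ - fullPotential U ζ 0 := by
  simp [reducedHessian, fullPotential, mulVec, dotProduct, add_mul, Finset.sum_add_distrib,
    ← Finset.mul_sum, neg_div]
  ring

theorem reducedDiffusion_mulVec (K : Matrix (Fin (n+1)) (Fin (n+1)) ℝ) {U : Fin n → ℝ}
    (hU : ∀ i, U i ≠ 0) (hU0 : 1 - ∑ i, U i ≠ 0) (ζ : Fin n → ℝ) (i : Fin n) :
    (reducedDiffusion K U *ᵥ ζ) i = ∑ j, K i.succ j * (fullConc U i.succ * fullConc U j) *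
      (fullPotential U ζ i.succ - fullPotential U ζ j) := by
  have hterm : ∀ j, K i.succ j.succ * (U i * U j) * (ζ i / U i - ζ j / U j)
      = K i.succ j.succ * U j * ζ i - K i.succ j.succ * U i * ζ j := by
    intro j; field_simp [hU i, hU j]
  have hterm0 : K i.succ 0 * (U i * (1 - ∑ k, U k)) * (ζ i / U i - -(∑ k, ζ k) / (1 - ∑ k, U k))
      = K i.succ 0 * (1 - ∑ k, U k) * ζ i + K i.succ 0 * U i * ∑ k, ζ k := by
    field_simp [hU i, hU0]
    ring
  simp only [reducedDiffusion, mulVec, dotProduct, of_apply, sub_mul, ite_mul, zero_mul,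
    Finset.sum_sub_distrib, Finset.sum_ite_eq, Finset.mem_univ, if_true,
    fullConc, fullPotential, Fin.sum_univ_succ, Fin.cons_zero, Fin.cons_succ,
    hterm0, hterm, ← Finset.sum_mul, ← Finset.mul_sum]
  ring

theorem reducedHessian_isSymm (U : Fin n → ℝ) : (reducedHessian U).IsSymm := by
  ext i j
  rcases eq_or_ne i j with rfl | hij
  · rfl
  · simp [reducedHessian, hij, hij.symm]

theorem sum_fullConc (U : Fin n → ℝ) : ∑ k, fullConc U k = 1 := by
  simp [fullConc, Fin.sum_univ_succ]

theorem sum_fullConc_mul_fullPotential {U : Fin n → ℝ} (hU : ∀ i, U i ≠ 0)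
    (hU0 : 1 - ∑ i, U i ≠ 0) (ζ : Fin n → ℝ) :
    ∑ k, fullConc U k * fullPotential U ζ k = 0 := by
  simp [fullConc, fullPotential, Fin.sum_univ_succ, mul_div_cancel₀ _ (hU _),
    mul_div_cancel₀ _ hU0]

theorem exists_fullPotential_ne {U : Fin n → ℝ} (hU : ∀ i, U i ≠ 0)
    (hU0 : 1 - ∑ i, U i ≠ 0) {ζ : Fin n → ℝ} (hζ : ζ ≠ 0) :
    ∃ k l, fullPotential U ζ k ≠ fullPotential U ζ l := by
  by_contra! hconst
  have hzero : fullPotential U ζ 0 = 0 := by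
    have h := sum_fullConc_mul_fullPotential hU hU0 ζ
    simp_rw [hconst _ 0] at h
    rwa [← Finset.sum_mul, sum_fullConc, one_mul] at h
  refine hζ (funext fun i => ?_)
  have hi := hconst i.succ 0
  rw [hzero] at hi
  simpa [fullPotential, hU i] using hi

theorem dotProduct_reducedHessian_mul_reducedDiffusion_mulVec {K : Matrix (Fin (n+1)) (Fin (n+1)) ℝ}
    (hsym : ∀ i j, K i j = K j i) {U : Fin n → ℝ} (hU : ∀ i, U i ≠ 0)
    (hU0 : 1 - ∑ i, U i ≠ 0) (η ζ : Fin n → ℝ) :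
    η ⬝ᵥ (reducedHessian U * reducedDiffusion K U) *ᵥ ζ
      = dirichletForm (fun i j => K i j * (fullConc U i * fullConc U j))
          (fullPotential U η) (fullPotential U ζ) := by
  rw [← mulVec_mulVec, dotProduct_mulVec, ← mulVec_transpose, reducedHessian_isSymm,
    ← sum_sub_mul_sum_eq_dirichletForm (fun i j => by rw [hsym, mul_comm (fullConc U i)]) _ _
      (fullPotential U η 0), Fin.sum_univ_succ, sub_self, zero_mul, zero_add]
  simp only [dotProduct, reducedHessian_mulVec, reducedDiffusion_mulVec K hU hU0, mul_assoc]

theorem reducedHessian_posDef {U : Fin n → ℝ} (hpos : ∀ i, 0 < U i) (hsum : ∑ i, U i < 1) :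
    (reducedHessian U).PosDef := by
  have hdecomp : reducedHessian U
      = diagonal (fun i => 1 / U i) + (1 / (1 - ∑ k, U k)) • vecMulVec 1 (star 1) := by
    ext i j
    simp [reducedHessian, diagonal, vecMulVec]
  rw [hdecomp]
  exact (PosDef.diagonal fun i => one_div_pos.mpr (hpos i)).add_posSemidef
    ((posSemidef_vecMulVec_self_star 1).smul (one_div_pos.mpr (sub_pos.mpr hsum)).le)

theorem reducedHessian_mul_reducedDiffusion_posDef
    {K : Matrix (Fin (n+1)) (Fin (n+1)) ℝ} (hsym : ∀ i j, K i j = K j i)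
    (hposK : ∀ i j, i ≠ j → 0 < K i j) {U : Fin n → ℝ} (hpos : ∀ i, 0 < U i)
    (hsum : ∑ i, U i < 1) :
    (reducedHessian U * reducedDiffusion K U).PosDef := by
  have hU : ∀ i, U i ≠ 0 := fun i => (hpos i).ne'
  have hU0 : 1 - ∑ i, U i ≠ 0 := (sub_pos.mpr hsum).ne'
  have hconc : ∀ k, 0 < fullConc U k := Fin.cases (sub_pos.mpr hsum) hpos
  refine .of_dotProduct_mulVec_pos (isHermitian_iff_isSymm.mpr ?_) fun ζ hζ => ?_
  · refine IsSymm.of_dotProduct_mulVec_comm fun η ζ => ?_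
    rw [dotProduct_reducedHessian_mul_reducedDiffusion_mulVec hsym hU hU0,
      dotProduct_reducedHessian_mul_reducedDiffusion_mulVec hsym hU hU0, dirichletForm_comm]
  · rw [star_trivial, dotProduct_reducedHessian_mul_reducedDiffusion_mulVec hsym hU hU0]
    exact dirichletForm_self_pos
      (fun k l hkl => mul_pos (hposK k l hkl) (mul_pos (hconc k) (hconc l)))
      (exists_fullPotential_ne hU hU0 hζ)

end ReducedSystem

theorem stmt_15_general (n : ℕ) (K : Matrix (Fin (n+1)) (Fin (n+1)) ℝ)
    (hsym : ∀ i j, K i j = K j i)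
    (hposK : ∀ i j, i ≠ j → 0 < K i j)
    (U : Fin n → ℝ) (hpos : ∀ i, 0 < U i) (hsum : ∑ i, U i < 1) :
    let Ahat : Matrix (Fin n) (Fin n) ℝ :=
      Matrix.of fun i j =>
        (if i = j then (∑ l, K i.succ l.succ * U l) + K i.succ 0 * (1 - ∑ l, U l) else 0)
          - (K i.succ j.succ - K i.succ 0) * U i
    let Hhat : Matrix (Fin n) (Fin n) ℝ :=
      Matrix.of fun i j => (if i = j then 1 / U i else 0) + 1 / (1 - ∑ k, U k)
    let Mhat : Matrix (Fin n) (Fin n) ℝ := Ahat * Hhat⁻¹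
    Mhat.IsSymm ∧ Mhat.PosDef ∧
      ∀ μ ∈ spectrum ℂ (Ahat.map (fun x : ℝ => (x : ℂ))), 0 < μ.re := by
  intro Ahat Hhat Mhat
  have hH : Hhat.PosDef := reducedHessian_posDef hpos hsum
  have hHA : (Hhat * Ahat).PosDef :=
    reducedHessian_mul_reducedDiffusion_posDef hsym hposK hpos hsum
  have hM : Mhat.PosDef := hH.mul_inv_of_posDef_mul hHA
  refine ⟨isHermitian_iff_isSymm.mp hM.isHermitian, hM, fun μ hμ => ?_⟩
  have hHAc : (Hhat.map ((↑) : ℝ → ℂ) * Ahat.map ((↑) : ℝ → ℂ)).PosDef := by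
    convert hHA.map_ofReal using 1
    exact (Matrix.map_mul (f := Complex.ofRealHom)).symm
  exact (Complex.pos_iff.mp (pos_of_mem_spectrum_of_posDef_mul hH.map_ofReal hHAc hμ)).1

/-- for K symmetric, zero diagonal, K_{ij} > 0 off-diagonal,
the reduced mobility M̂(U) = Â(U)(D²ĥ(U))⁻¹ is symmetric positive definite on D,
and every eigenvalue of Â(U) has positive real part. -/
theorem stmt_15 (n : ℕ) (hn : 1 ≤ n) (K : Matrix (Fin (n+1)) (Fin (n+1)) ℝ)
    (hdiag : ∀ i, K i i = 0) (hsym : ∀ i j, K i j = K j i)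
    (hposK : ∀ i j, i ≠ j → 0 < K i j)
    (U : Fin n → ℝ) (hpos : ∀ i, 0 < U i) (hsum : ∑ i, U i < 1) :
    let Ahat : Matrix (Fin n) (Fin n) ℝ :=
      Matrix.of fun i j =>
        (if i = j then (∑ l, K i.succ l.succ * U l) + K i.succ 0 * (1 - ∑ l, U l) else 0)
          - (K i.succ j.succ - K i.succ 0) * U i
    let Hhat : Matrix (Fin n) (Fin n) ℝ :=
      Matrix.of fun i j => (if i = j then 1 / U i else 0) + 1 / (1 - ∑ k, U k)
    let Mhat : Matrix (Fin n) (Fin n) ℝ := Ahat * Hhat⁻¹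
    Mhat.IsSymm ∧ Mhat.PosDef ∧
      ∀ μ ∈ spectrum ℂ (Ahat.map (fun x : ℝ => (x : ℂ))), 0 < μ.re :=
  stmt_15_general n K hsym hposK U hpos hsum
end

section
/- For i ∈ {1,…,n} and U ∈ D, define φ-gradients via the identity D_i ĥ(U) = log(U_i/v), v = 1 − Σ U_j. Let ι ∈ (0,1) and suppose U, Ũ ∈ D satisfy U_i ≥ ι and Ũ_i ≥ ι for all i (including v, ṽ ≥ ι). Then for arbitrary vectors (ξ_j)_{j=1}^n, (ξ̃_j)_{j=1}^n ∈ (ℝ^d)^n there exist constants ε(ι) > 0 and C(ι, L) < ∞ (L bounding |ξ̃|) such that Σ_{i=1}^n |Σ_j D_{ij}ĥ(U) ξ_j − Σ_j D_{ij}ĥ(Ũ) ξ̃_j|² ≥ ε(ι) |ξ − ξ̃|² − C(ι, L) |U − Ũ|². -/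
open Finset

lemma half_sq_aux (p q : ℝ) : 1/2 * p^2 - q^2 ≤ (p + q)^2 := by
  nlinarith [sq_nonneg (p + 2*q)]

lemma quad2_aux (A s B t : ℝ) :
    (A * s + B * t)^2 ≤ 2 * A^2 * s^2 + 2 * B^2 * t^2 := by
  nlinarith [sq_nonneg (A * s - B * t)]

/-- Coercivity of the Hessian matrix: since `A = diag(1/uᵢ) + (1/v)E ⪰ I`,
we have `|Aη|² ≥ |η|²`. -/
lemma coercP {n : ℕ} (u : Fin n → ℝ) (v ι : ℝ) (hι : 0 < ι) (hv : ι ≤ v)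
    (hu : ∀ i, ι ≤ u i) (hu1 : ∀ i, u i ≤ 1) (η : Fin n → ℝ) :
    ∑ i, (η i)^2 ≤ ∑ i, (η i / u i + (∑ j, η j)/v)^2 := by
  have hv0 : 0 < v := lt_of_lt_of_le hι hv
  set P : Fin n → ℝ := fun i => η i / u i + (∑ j, η j)/v with hPdef
  have hsplit : ∑ i, P i * η i = (∑ i, (η i)^2 / u i) + (∑ j, η j)^2 / v := by
    have : ∀ i : Fin n, P i * η i = (η i)^2 / u i + (∑ j, η j)/v * η i := by
      intro i; simp only [hPdef]; ring
    rw [Finset.sum_congr rfl (fun i _ => this i), Finset.sum_add_distrib,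
      ← Finset.mul_sum]
    ring
  have hT : ∑ i, (η i)^2 ≤ ∑ i, P i * η i := by
    rw [hsplit]
    have h1 : ∑ i, (η i)^2 ≤ ∑ i, (η i)^2 / u i := by
      apply Finset.sum_le_sum
      intro i _
      have h0 : 0 < u i := lt_of_lt_of_le hι (hu i)
      rw [le_div_iff₀ h0]
      nlinarith [sq_nonneg (η i), hu1 i, sq_nonneg (η i)]
    have h2 : (0:ℝ) ≤ (∑ j, η j)^2 / v := by positivity
    linarith
  have hCS := Finset.sum_mul_sq_le_sq_mul_sq Finset.univ P η
  have hS2 : (0:ℝ) ≤ ∑ i, (η i)^2 := by positivity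
  rcases eq_or_lt_of_le hS2 with h0 | h0
  · have : (0:ℝ) ≤ ∑ i, P i ^ 2 := by positivity
    linarith
  · have hT0 : 0 < ∑ i, P i * η i := lt_of_lt_of_le h0 hT
    nlinarith [hCS, hT, h0]

set_option maxHeartbeats 1000000 in
/-- coercivity estimate, eq. (108) of the paper: with
D_{ij}ĥ(U) = δ_{ij}/U_i + 1/v, for U, Ũ with all components (incl. v) ≥ ι and |ξ̃| ≤ L,
Σ_i |Σ_j D_{ij}ĥ(U) ξ_j − Σ_j D_{ij}ĥ(Ũ) ξ̃_j|² ≥ ε(ι)|ξ − ξ̃|² − C(ι,L)|U − Ũ|². -/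
theorem stmt_18 (n d : ℕ) (hn : 1 ≤ n) (ι : ℝ) (hι : ι ∈ Set.Ioo (0:ℝ) 1)
    (L : ℝ) (hL : 0 ≤ L) :
    ∃ ε > 0, ∃ C : ℝ, ∀ U Ut : Fin n → ℝ,
      (∀ i, ι ≤ U i) → ι ≤ 1 - ∑ i, U i →
      (∀ i, ι ≤ Ut i) → ι ≤ 1 - ∑ i, Ut i →
      ∀ ξ ξt : Fin n → Fin d → ℝ,
        (∑ j, ∑ a, (ξt j a)^2 ≤ L^2) →
        ∑ i, ∑ a,
            ((∑ j, ((if i = j then 1 / U i else 0) + 1 / (1 - ∑ k, U k)) * ξ j a)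
              - ∑ j, ((if i = j then 1 / Ut i else 0) + 1 / (1 - ∑ k, Ut k)) * ξt j a)^2
          ≥ ε * ∑ j, ∑ a, (ξ j a - ξt j a)^2 - C * ∑ i, (U i - Ut i)^2 := by
  obtain ⟨hι0, hι1⟩ := hι
  refine ⟨1/2, by norm_num, (2*(n:ℝ)*L^2 + 2*(n:ℝ)^3*L^2) / ι^4, ?_⟩
  intro U Ut hU hvU hUt hvUt ξ ξt hξt
  set v : ℝ := 1 - ∑ k, U k with hv
  set vt : ℝ := 1 - ∑ k, Ut k with hvt
  have hv0 : 0 < v := lt_of_lt_of_le hι0 hvU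
  have hvt0 : 0 < vt := lt_of_lt_of_le hι0 hvUt
  have hUpos : ∀ i, 0 < U i := fun i => lt_of_lt_of_le hι0 (hU i)
  have hUtpos : ∀ i, 0 < Ut i := fun i => lt_of_lt_of_le hι0 (hUt i)
  have hUle1 : ∀ i, U i ≤ 1 := by
    intro i
    have h1 : U i ≤ ∑ k, U k := Finset.single_le_sum (fun k _ => (hUpos k).le) (Finset.mem_univ i)
    linarith
  have hUtle1 : ∀ i, Ut i ≤ 1 := by
    intro i
    have h1 : Ut i ≤ ∑ k, Ut k :=
      Finset.single_le_sum (fun k _ => (hUtpos k).le) (Finset.mem_univ i)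
    linarith
  -- simplify the inner sums
  have hinner : ∀ (W : Fin n → ℝ) (w : ℝ) (ζ : Fin n → Fin d → ℝ) (i : Fin n) (a : Fin d),
      ∑ j, ((if i = j then 1 / W i else 0) + 1 / w) * ζ j a
        = ζ i a / W i + (∑ j, ζ j a) / w := by
    intro W w ζ i a
    have : ∀ j : Fin n, ((if i = j then 1 / W i else 0) + 1 / w) * ζ j a
        = (if i = j then ζ j a / W i else 0) + ζ j a / w := by
      intro j
      by_cases h : i = j <;> simp [h] <;> ring
    rw [Finset.sum_congr rfl (fun j _ => this j), Finset.sum_add_distrib,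
      Finset.sum_ite_eq Finset.univ i (fun j => ζ j a / W i), if_pos (Finset.mem_univ i),
      ← Finset.sum_div]
  -- notation
  set η : Fin n → Fin d → ℝ := fun j a => ξ j a - ξt j a with hη
  set P : Fin n → Fin d → ℝ := fun i a => η i a / U i + (∑ j, η j a) / v with hP
  set Q : Fin n → Fin d → ℝ := fun i a =>
    (1 / U i - 1 / Ut i) * ξt i a + (1 / v - 1 / vt) * (∑ j, ξt j a) with hQ
  have hdecomp : ∀ (i : Fin n) (a : Fin d),
      (∑ j, ((if i = j then 1 / U i else 0) + 1 / (1 - ∑ k, U k)) * ξ j a)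
        - ∑ j, ((if i = j then 1 / Ut i else 0) + 1 / (1 - ∑ k, Ut k)) * ξt j a
      = P i a + Q i a := by
    intro i a
    rw [hinner U (1 - ∑ k, U k) ξ i a, hinner Ut (1 - ∑ k, Ut k) ξt i a]
    simp only [hP, hQ, hη, ← hv, ← hvt, Finset.sum_sub_distrib]
    field_simp
    ring
  -- pointwise: (P+Q)² ≥ P²/2 − Q²
  have hmain : ∑ i, ∑ a,
      ((∑ j, ((if i = j then 1 / U i else 0) + 1 / (1 - ∑ k, U k)) * ξ j a)
        - ∑ j, ((if i = j then 1 / Ut i else 0) + 1 / (1 - ∑ k, Ut k)) * ξt j a)^2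
      ≥ (1/2) * (∑ i, ∑ a, (P i a)^2) - ∑ i, ∑ a, (Q i a)^2 := by
    have h1 : ∀ (i : Fin n) (a : Fin d),
        (1/2) * (P i a)^2 - (Q i a)^2 ≤ (P i a + Q i a)^2 := by
      intro i a; exact half_sq_aux _ _
    calc (1/2) * (∑ i, ∑ a, (P i a)^2) - ∑ i, ∑ a, (Q i a)^2
        = ∑ i, ∑ a, ((1/2) * (P i a)^2 - (Q i a)^2) := by
          rw [Finset.mul_sum]
          rw [← Finset.sum_sub_distrib]
          apply Finset.sum_congr rfl
          intro i _
          rw [Finset.mul_sum, ← Finset.sum_sub_distrib]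
      _ ≤ ∑ i, ∑ a, (P i a + Q i a)^2 := by
          apply Finset.sum_le_sum; intro i _
          apply Finset.sum_le_sum; intro a _
          exact h1 i a
      _ = _ := by
          apply Finset.sum_congr rfl; intro i _
          apply Finset.sum_congr rfl; intro a _
          rw [hdecomp i a]
  -- lower bound for ΣP²
  have hPlow : ∑ j, ∑ a, (η j a)^2 ≤ ∑ i, ∑ a, (P i a)^2 := by
    rw [Finset.sum_comm (γ := Fin n) (f := fun i a => (P i a)^2),
      Finset.sum_comm (γ := Fin n) (f := fun j a => (η j a)^2)]
    apply Finset.sum_le_sum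
    intro a _
    exact coercP U v ι hι0 hvU hU hUle1 (fun j => η j a)
  -- upper bound for ΣQ²
  have hΔ : ∀ i, (U i - Ut i)^2 ≤ ∑ k, (U k - Ut k)^2 := by
    intro i
    exact Finset.single_le_sum (f := fun k => (U k - Ut k)^2)
      (fun k _ => sq_nonneg _) (Finset.mem_univ i)
  have hΔ0 : (0:ℝ) ≤ ∑ k, (U k - Ut k)^2 := by positivity
  have hdiffU : ∀ i, (1 / U i - 1 / Ut i)^2 ≤ (U i - Ut i)^2 / ι^4 := by
    intro i
    have h1 : 1 / U i - 1 / Ut i = (Ut i - U i) / (U i * Ut i) := by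
      rw [div_sub_div _ _ (hUpos i).ne' (hUtpos i).ne', one_mul, mul_one]
    rw [h1, div_pow, div_le_div_iff₀ (pow_pos (mul_pos (hUpos i) (hUtpos i)) 2)
      (by positivity)]
    have h2 : ι^2 ≤ (U i * Ut i) := by nlinarith [hU i, hUt i]
    have h4 : ι^2 * ι^2 ≤ (U i * Ut i) * (U i * Ut i) :=
      mul_le_mul h2 h2 (by positivity) (mul_pos (hUpos i) (hUtpos i)).le
    have h6 : (Ut i - U i)^2 * (ι^2 * ι^2)
        ≤ (U i - Ut i)^2 * ((U i * Ut i) * (U i * Ut i)) := by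
      have h7 : (Ut i - U i)^2 = (U i - Ut i)^2 := by ring
      rw [h7]
      exact mul_le_mul_of_nonneg_left h4 (sq_nonneg _)
    calc (Ut i - U i)^2 * ι^4 = (Ut i - U i)^2 * (ι^2 * ι^2) := by ring
      _ ≤ (U i - Ut i)^2 * ((U i * Ut i) * (U i * Ut i)) := h6
      _ = (U i - Ut i)^2 * (U i * Ut i)^2 := by ring
  have hdiffv : (1 / v - 1 / vt)^2 ≤ (n:ℝ) * (∑ k, (U k - Ut k)^2) / ι^4 := by
    have h1 : 1 / v - 1 / vt = (vt - v) / (v * vt) := by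
      rw [div_sub_div _ _ hv0.ne' hvt0.ne', one_mul, mul_one]
    have h2 : vt - v = ∑ k, (U k - Ut k) := by
      simp only [hv, hvt, Finset.sum_sub_distrib]; ring
    have h3 : (vt - v)^2 ≤ (n:ℝ) * ∑ k, (U k - Ut k)^2 := by
      rw [h2]
      have := sq_sum_le_card_mul_sum_sq (s := Finset.univ) (f := fun k => U k - Ut k)
      simpa using this
    rw [h1, div_pow, div_le_div_iff₀ (pow_pos (mul_pos hv0 hvt0) 2) (by positivity)]
    have h4 : ι^2 ≤ v * vt := by nlinarith
    have h5 : ι^2 * ι^2 ≤ (v * vt) * (v * vt) :=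
      mul_le_mul h4 h4 (by positivity) (mul_pos hv0 hvt0).le
    have h6 : (vt - v)^2 * (ι^2 * ι^2)
        ≤ ((n:ℝ) * ∑ k, (U k - Ut k)^2) * ((v * vt) * (v * vt)) :=
      mul_le_mul h3 h5 (by positivity) (by positivity)
    calc (vt - v)^2 * ι^4 = (vt - v)^2 * (ι^2 * ι^2) := by ring
      _ ≤ ((n:ℝ) * ∑ k, (U k - Ut k)^2) * ((v * vt) * (v * vt)) := h6
      _ = (n:ℝ) * (∑ k, (U k - Ut k)^2) * (v * vt)^2 := by ring
  have hSt : ∀ a : Fin d, (∑ j, ξt j a)^2 ≤ (n:ℝ) * ∑ j, (ξt j a)^2 := by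
    intro a
    have := sq_sum_le_card_mul_sum_sq (s := Finset.univ) (f := fun j => ξt j a)
    simpa using this
  set D2 : ℝ := ∑ k, (U k - Ut k)^2 with hD2
  have hQup : ∑ i, ∑ a, (Q i a)^2
      ≤ (2*(n:ℝ)*L^2 + 2*(n:ℝ)^3*L^2) / ι^4 * D2 := by
    have hξtswap : ∑ a, ∑ j, (ξt j a)^2 ≤ L^2 := by
      rw [Finset.sum_comm]; exact hξt
    have hStot : ∑ a, (∑ j, ξt j a)^2 ≤ (n:ℝ) * L^2 := by
      calc ∑ a, (∑ j, ξt j a)^2 ≤ ∑ a, (n:ℝ) * ∑ j, (ξt j a)^2 :=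
            Finset.sum_le_sum (fun a _ => hSt a)
        _ = (n:ℝ) * ∑ a, ∑ j, (ξt j a)^2 := by rw [Finset.mul_sum]
        _ ≤ (n:ℝ) * L^2 := by
            apply mul_le_mul_of_nonneg_left hξtswap (by positivity)
    have hrow : ∀ i : Fin n, ∑ a, (ξt i a)^2 ≤ L^2 := by
      intro i
      have h1 : ∑ a, (ξt i a)^2 ≤ ∑ j, ∑ a, (ξt j a)^2 :=
        Finset.single_le_sum (s := Finset.univ)
          (f := fun j => ∑ a, (ξt j a)^2) (fun j _ => by positivity) (Finset.mem_univ i)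
      linarith
    have hpt : ∀ (i : Fin n) (a : Fin d),
        (Q i a)^2 ≤ 2 * (1 / U i - 1 / Ut i)^2 * (ξt i a)^2
          + 2 * (1 / v - 1 / vt)^2 * (∑ j, ξt j a)^2 := by
      intro i a
      simp only [hQ]
      exact quad2_aux _ _ _ _
    have hA : ∀ i, (1 / U i - 1 / Ut i)^2 ≤ D2 / ι^4 := by
      intro i
      refine le_trans (hdiffU i) ?_
      gcongr
      · exact hΔ i
    have hfix : ∀ i : Fin n, ∑ a, (Q i a)^2
        ≤ 2 * (D2 / ι^4) * L^2 + 2 * ((n:ℝ) * D2 / ι^4) * ((n:ℝ) * L^2) := by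
      intro i
      calc ∑ a, (Q i a)^2
          ≤ ∑ a, (2 * (1 / U i - 1 / Ut i)^2 * (ξt i a)^2
              + 2 * (1 / v - 1 / vt)^2 * (∑ j, ξt j a)^2) :=
            Finset.sum_le_sum (fun a _ => hpt i a)
        _ = 2 * (1 / U i - 1 / Ut i)^2 * (∑ a, (ξt i a)^2)
            + 2 * (1 / v - 1 / vt)^2 * (∑ a, (∑ j, ξt j a)^2) := by
            rw [Finset.sum_add_distrib, ← Finset.mul_sum, ← Finset.mul_sum]
        _ ≤ 2 * (D2 / ι^4) * L^2 + 2 * ((n:ℝ) * D2 / ι^4) * ((n:ℝ) * L^2) := by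
            have t1 : 2 * (1 / U i - 1 / Ut i)^2 * (∑ a, (ξt i a)^2)
                ≤ 2 * (D2 / ι^4) * L^2 := by
              have h0 : (0:ℝ) ≤ ∑ a, (ξt i a)^2 := by positivity
              have := mul_le_mul (hA i) (hrow i) h0 (by positivity)
              nlinarith [this]
            have t2 : 2 * (1 / v - 1 / vt)^2 * (∑ a, (∑ j, ξt j a)^2)
                ≤ 2 * ((n:ℝ) * D2 / ι^4) * ((n:ℝ) * L^2) := by
              have h0 : (0:ℝ) ≤ ∑ a, (∑ j, ξt j a)^2 := by positivity
              have := mul_le_mul hdiffv hStot h0 (by positivity)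
              nlinarith [this]
            linarith
    calc ∑ i, ∑ a, (Q i a)^2
        ≤ ∑ i : Fin n, (2 * (D2 / ι^4) * L^2 + 2 * ((n:ℝ) * D2 / ι^4) * ((n:ℝ) * L^2)) :=
          Finset.sum_le_sum (fun i _ => hfix i)
      _ = (n:ℝ) * (2 * (D2 / ι^4) * L^2 + 2 * ((n:ℝ) * D2 / ι^4) * ((n:ℝ) * L^2)) := by
          rw [Finset.sum_const, Finset.card_univ, Fintype.card_fin, nsmul_eq_mul]
      _ = (2*(n:ℝ)*L^2 + 2*(n:ℝ)^3*L^2) / ι^4 * D2 := by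
          field_simp
  -- conclude
  have hfinal : (1/2) * (∑ j, ∑ a, (η j a)^2) ≤ (1/2) * (∑ i, ∑ a, (P i a)^2) := by
    linarith
  simp only [hη] at hPlow hfinal ⊢
  linarith [hmain, hfinal, hQup]
end
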